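/- Let v be a weight on the unit disc of the form v = |μ|, where μ is analytic and zero-free on the disc, and let 1 ≤ p < ∞. Then for every f in the weighted Bergman space A_v^p and every z in the unit disc, |f(z)| ≤ ‖f‖_{A_v^p} / ((1-|z|²)^{2/p} · v(z)^{1/p}). -/

import Mathlib

open MeasureTheory Metric Complex

/-- Normalized area measure on the unit disc. -/
noncomputable def dA : Measure ℂ :=
  (ENNReal.ofReal Real.pi)⁻¹ • (volume.restrict (ball (0:ℂ) 1))

/-- A weight: strictly positive, bounded, continuous on the disc. -/
def IsWeight (v : ℂ → ℝ) : Prop :=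
  ContinuousOn v (ball (0:ℂ) 1) ∧ (∀ z ∈ ball (0:ℂ) 1, 0 < v z) ∧
    ∃ C : ℝ, ∀ z ∈ ball (0:ℂ) 1, v z ≤ C

/-- `v = |μ|` with `μ` analytic and zero-free on the disc. -/
def IsAnalyticWeight (v : ℂ → ℝ) (μ : ℂ → ℂ) : Prop :=
  DifferentiableOn ℂ μ (ball (0:ℂ) 1) ∧ (∀ z ∈ ball (0:ℂ) 1, μ z ≠ 0) ∧
    ∀ z ∈ ball (0:ℂ) 1, v z = ‖μ z‖

/-- The (vector-valued) weighted Bergman norm. -/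
noncomputable def bergNorm (X : Type*) [NormedAddCommGroup X] (p : ℝ) (v : ℂ → ℝ)
    (f : ℂ → X) : ℝ :=
  (∫ z, ‖f z‖ ^ p * v z ∂dA) ^ (1/p)

/-- The weak vector-valued weighted Bergman norm. -/
noncomputable def wBergNorm (X : Type*) [NormedAddCommGroup X] [NormedSpace ℂ X]
    (p : ℝ) (v : ℂ → ℝ) (f : ℂ → X) : ℝ :=
  ⨆ l : {l : StrongDual ℂ X // ‖l‖ ≤ 1},
    bergNorm ℂ p v (fun z => (l : StrongDual ℂ X) (f z))

/-- The (vector-valued) weighted Hardy norm. -/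
noncomputable def hardyNorm (X : Type*) [NormedAddCommGroup X] (p : ℝ) (v : ℂ → ℝ)
    (f : ℂ → X) : ℝ :=
  ⨆ r : Set.Ioo (0:ℝ) 1,
    ((2*Real.pi)⁻¹ * ∫ θ in (0:ℝ)..(2*Real.pi),
      ‖f (((r:ℝ):ℂ) * Complex.exp (θ * Complex.I))‖ ^ p *
        v (((r:ℝ):ℂ) * Complex.exp (θ * Complex.I))) ^ (1/p)

/-- The weak vector-valued weighted Hardy norm. -/
noncomputable def wHardyNorm (X : Type*) [NormedAddCommGroup X] [NormedSpace ℂ X]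
    (p : ℝ) (v : ℂ → ℝ) (f : ℂ → X) : ℝ :=
  ⨆ l : {l : StrongDual ℂ X // ‖l‖ ≤ 1},
    hardyNorm ℂ p v (fun z => (l : StrongDual ℂ X) (f z))

/-!
Write `v = |μ|` and let `φ(w) = (z + w) / (1 + z̄ w)` be the disc automorphism with `φ 0 = z`.
Taking a holomorphic `p`-th root of the zero-free function `(μ ∘ φ) · φ' ^ 2`, the function
`G = (f ∘ φ) · ((μ ∘ φ) · φ' ^ 2) ^ (1 / p)` is holomorphic with
`|G| ^ p = |φ'| ^ 2 · (|f| ^ p v) ∘ φ`, so the conformal change of variables gives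
`∫_𝔻 |G| ^ p = ∫_𝔻 |f| ^ p v`. For `p ≥ 1`, the mean value property and Jensen's inequality
for `t ↦ t ^ p` show that the circle means of `|G| ^ p` dominate `|G 0| ^ p`; integrating in
polar coordinates, `π |G 0| ^ p ≤ ∫_𝔻 |G| ^ p`, and `|G 0| ^ p = (1 - |z| ^ 2) ^ 2 |f z| ^ p v z`.
-/

open scoped Real ENNReal Interval ComplexConjugate

section HolomorphicLog

variable {c : ℂ} {r : ℝ} {ψ : ℂ → ℂ}

theorem DifferentiableOn.exists_cexp_eq (hψ : DifferentiableOn ℂ ψ (ball c r))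
    (hψ0 : ∀ w ∈ ball c r, ψ w ≠ 0) :
    ∃ L : ℂ → ℂ, DifferentiableOn ℂ L (ball c r) ∧ ∀ w ∈ ball c r, Complex.exp (L w) = ψ w := by
  rcases le_or_gt r 0 with hr | hr
  · exact ⟨0, by simp [ball_eq_empty.2 hr]⟩
  have hc : c ∈ ball c r := mem_ball_self hr
  obtain ⟨L, hLc, hL⟩ := ((hψ.deriv isOpen_ball).div hψ hψ0).isExactOn_ball.with_val_at c
    (Complex.log (ψ c))
  refine ⟨L, fun w hw ↦ (hL w hw).differentiableAt.differentiableWithinAt, fun w hw ↦ ?_⟩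
  have hderiv : ∀ x ∈ ball c r, HasDerivAt (fun x ↦ ψ x * Complex.exp (-L x)) 0 x := by
    intro x hx
    have hψx := (hψ.differentiableAt (isOpen_ball.mem_nhds hx)).hasDerivAt
    refine (hψx.mul (hL x hx).neg.cexp).congr_deriv ?_
    simp only [Pi.div_apply, Pi.neg_apply]
    field_simp [hψ0 x hx]
    ring
  have hconst := isOpen_ball.is_const_of_deriv_eq_zero (convex_ball c r).isPreconnected
    (fun x hx ↦ (hderiv x hx).differentiableAt.differentiableWithinAt)
    (fun x hx ↦ (hderiv x hx).deriv) hw hc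
  simp only [hLc, exp_neg, exp_log (hψ0 c hc), mul_inv_cancel₀ (hψ0 c hc)] at hconst
  rw [mul_inv_eq_one₀ (exp_ne_zero _)] at hconst
  exact hconst.symm

theorem DifferentiableOn.exists_rpow_norm_eq (hψ : DifferentiableOn ℂ ψ (ball c r))
    (hψ0 : ∀ w ∈ ball c r, ψ w ≠ 0) {p : ℝ} (hp : p ≠ 0) :
    ∃ k : ℂ → ℂ, DifferentiableOn ℂ k (ball c r) ∧ ∀ w ∈ ball c r, ‖k w‖ ^ p = ‖ψ w‖ := by
  obtain ⟨L, hLd, hL⟩ := hψ.exists_cexp_eq hψ0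
  refine ⟨fun w ↦ Complex.exp (L w / p), (hLd.div_const _).cexp, fun w hw ↦ ?_⟩
  rw [← hL w hw, norm_exp, norm_exp, ← Real.exp_mul, div_ofReal_re, div_mul_cancel₀ _ hp]

end HolomorphicLog

section SubMeanValue

variable {g : ℂ → ℂ} {p : ℝ}

theorem DiffContOnCl.continuous_comp_circleMap {c : ℂ} {R : ℝ} (hg : DiffContOnCl ℂ g (ball c |R|))
    (hR : R ≠ 0) : Continuous fun θ ↦ g (circleMap c R θ) := by
  refine hg.continuousOn.comp_continuous (continuous_circleMap c R) fun θ ↦ ?_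
  rw [closure_ball c (abs_ne_zero.2 hR)]
  exact sphere_subset_closedBall (circleMap_mem_sphere' c R θ)

theorem norm_rpow_le_circleAverage {c : ℂ} {R : ℝ} (hg : DiffContOnCl ℂ g (ball c |R|))
    (hp : 1 ≤ p) : ‖g c‖ ^ p ≤ Real.circleAverage (fun w ↦ ‖g w‖ ^ p) c R := by
  rcases eq_or_ne R 0 with rfl | hR
  · simp
  have hcont := (hg.continuous_comp_circleMap hR).norm
  have hmean : ‖g c‖ ≤ Real.circleAverage (fun w ↦ ‖g w‖) c R := by
    rw [← hg.circleAverage, Real.circleAverage_def, Real.circleAverage_def, norm_smul,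
      Real.norm_of_nonneg (by positivity), smul_eq_mul]
    gcongr
    exact intervalIntegral.norm_integral_le_integral_norm Real.two_pi_pos.le
  have hvol : volume (Ι 0 (2 * π)) = ENNReal.ofReal (2 * π) := by
    rw [Set.uIoc_of_le Real.two_pi_pos.le, Real.volume_Ioc, sub_zero]
  have hp0 : 0 ≤ p := zero_le_one.trans hp
  calc ‖g c‖ ^ p ≤ (⨍ θ in 0..2 * π, ‖g (circleMap c R θ)‖) ^ p := by
        rw [← Real.circleAverage_eq_intervalAverage (f := fun w ↦ ‖g w‖)]; gcongr
    _ ≤ ⨍ θ in 0..2 * π, ‖g (circleMap c R θ)‖ ^ p :=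
        (convexOn_rpow hp).map_set_average_le (continuousOn_id.rpow_const fun _ _ ↦ Or.inr hp0)
          isClosed_Ici (by simp [hvol, Real.pi_pos]) (by rw [hvol]; exact ENNReal.ofReal_ne_top)
          (Filter.Eventually.of_forall fun θ ↦ norm_nonneg (g (circleMap c R θ)))
          hcont.integrableOn_uIoc (hcont.rpow_const fun _ ↦ Or.inr hp0).integrableOn_uIoc
    _ = Real.circleAverage (fun w ↦ ‖g w‖ ^ p) c R :=
        (Real.circleAverage_eq_intervalAverage (f := fun w ↦ ‖g w‖ ^ p)).symm

theorem Real.two_pi_smul_circleAverage {E : Type*} [NormedAddCommGroup E] [NormedSpace ℝ E]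
    (f : ℂ → E) (c : ℂ) (R : ℝ) :
    (2 * π) • Real.circleAverage f c R = ∫ θ in Set.Ioo (-π) π, f (circleMap c R θ) := by
  rw [Real.circleAverage_eq_integral_add (-π), smul_inv_smul₀ Real.two_pi_pos.ne',
    intervalIntegral.integral_comp_add_right (fun θ ↦ f (circleMap c R θ)),
    intervalIntegral.integral_of_le (by linarith [Real.pi_pos]), integral_Ioc_eq_integral_Ioo]
  ring_nf

theorem ofReal_mul_norm_rpow_le_lintegral_circle {r : ℝ} (hr : 0 < r)
    (hg : DiffContOnCl ℂ g (ball 0 r)) (hp : 1 ≤ p) :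
    ENNReal.ofReal (2 * π * ‖g 0‖ ^ p * r) ≤
      ∫⁻ θ in Set.Ioo (-π) π, ENNReal.ofReal (r * ‖g (circleMap 0 r θ)‖ ^ p) := by
  rw [← abs_of_pos hr] at hg
  have hcont := ((hg.continuous_comp_circleMap hr.ne').norm.rpow_const
    fun _ ↦ Or.inr (zero_le_one.trans hp))
  simp only [ENNReal.ofReal_mul hr.le]
  rw [lintegral_const_mul' _ _ ENNReal.ofReal_ne_top, ← ofReal_integral_eq_lintegral_ofReal
      (hcont.integrableOn_Icc.mono_set Set.Ioo_subset_Icc_self)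
      (Filter.Eventually.of_forall fun _ ↦ by positivity),
    ← Real.two_pi_smul_circleAverage (fun w ↦ ‖g w‖ ^ p), smul_eq_mul, mul_comm,
    ← ENNReal.ofReal_mul hr.le]
  gcongr
  exact norm_rpow_le_circleAverage hg hp

theorem Complex.polarCoord_symm_eq_circleMap (q : ℝ × ℝ) :
    Complex.polarCoord.symm q = circleMap 0 q.1 q.2 := by
  rw [Complex.polarCoord_symm_apply, circleMap_zero, exp_mul_I, ← ofReal_cos, ← ofReal_sin]

theorem lintegral_Ioo_ofReal_const_mul {a R : ℝ} (ha : 0 ≤ a) (hR : 0 ≤ R) :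
    ∫⁻ r in Set.Ioo 0 R, ENNReal.ofReal (a * r) = ENNReal.ofReal (a * R ^ 2 / 2) := by
  rw [← ofReal_integral_eq_lintegral_ofReal (f := fun r ↦ a * r)
      ((continuous_const_mul a).integrableOn_Icc.mono_set Set.Ioo_subset_Icc_self)
      (ae_restrict_of_forall_mem measurableSet_Ioo fun r hr ↦ mul_nonneg ha hr.1.le),
    integral_const_mul, ← integral_Ioc_eq_integral_Ioo, ← intervalIntegral.integral_of_le hR,
    integral_id]
  ring_nf

theorem ofReal_mul_norm_rpow_le_lintegral_ball {R : ℝ} (hR : 0 ≤ R)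
    (hg : DifferentiableOn ℂ g (ball 0 R)) (hp : 1 ≤ p) :
    ENNReal.ofReal (π * R ^ 2 * ‖g 0‖ ^ p) ≤
      ∫⁻ w in ball (0 : ℂ) R, ENNReal.ofReal (‖g w‖ ^ p) := by
  have hmem : ∀ r ∈ Set.Ioo 0 R, ∀ θ, circleMap 0 r θ ∈ ball (0 : ℂ) R := fun r hr θ ↦ by
    simp [abs_of_pos hr.1, hr.2]
  set G : ℝ × ℝ → ℝ≥0∞ := fun q ↦ ENNReal.ofReal (q.1 * ‖g (circleMap 0 q.1 q.2)‖ ^ p)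
  have hS : MeasurableSet (Set.Ioo 0 R ×ˢ Set.Ioo (-π) π) :=
    measurableSet_Ioo.prod measurableSet_Ioo
  have hGmeas : AEMeasurable G (volume.restrict (Set.Ioo 0 R ×ˢ Set.Ioo (-π) π)) := by
    refine ENNReal.measurable_ofReal.comp_aemeasurable (ContinuousOn.aemeasurable ?_ hS)
    refine continuousOn_fst.mul ((hg.continuousOn.comp ?_ fun q hq ↦ hmem q.1 hq.1 q.2).norm
      |>.rpow_const fun _ _ ↦ Or.inr (zero_le_one.trans hp))
    exact (by simp_rw [circleMap_zero]; fun_prop :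
      Continuous fun q : ℝ × ℝ ↦ circleMap 0 q.1 q.2).continuousOn
  calc ENNReal.ofReal (π * R ^ 2 * ‖g 0‖ ^ p)
      = ∫⁻ r in Set.Ioo 0 R, ENNReal.ofReal (2 * π * ‖g 0‖ ^ p * r) := by
        rw [lintegral_Ioo_ofReal_const_mul (by positivity) hR]
        ring_nf
    _ ≤ ∫⁻ r in Set.Ioo 0 R, ∫⁻ θ in Set.Ioo (-π) π, G (r, θ) :=
        setLIntegral_mono' measurableSet_Ioo fun r hr ↦
          ofReal_mul_norm_rpow_le_lintegral_circle hr.1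
            (hg.diffContOnCl_ball (closedBall_subset_ball hr.2)) hp
    _ = ∫⁻ q in Set.Ioo 0 R ×ˢ Set.Ioo (-π) π, G q := (setLIntegral_prod G hGmeas).symm
    _ = ∫⁻ q in Set.Ioo 0 R ×ˢ Set.Ioo (-π) π, ENNReal.ofReal q.1 •
          (ball (0 : ℂ) R).indicator (fun w ↦ ENNReal.ofReal (‖g w‖ ^ p))
            (Complex.polarCoord.symm q) := by
        refine setLIntegral_congr_fun hS fun q hq ↦ ?_
        rw [Complex.polarCoord_symm_eq_circleMap, Set.indicator_of_mem (hmem q.1 hq.1 q.2),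
          smul_eq_mul, ← ENNReal.ofReal_mul hq.1.1.le]
    _ ≤ ∫⁻ q in polarCoord.target, ENNReal.ofReal q.1 •
          (ball (0 : ℂ) R).indicator (fun w ↦ ENNReal.ofReal (‖g w‖ ^ p))
            (Complex.polarCoord.symm q) :=
        lintegral_mono_set (Set.prod_mono Set.Ioo_subset_Ioi_self subset_rfl)
    _ = ∫⁻ w in ball (0 : ℂ) R, ENNReal.ofReal (‖g w‖ ^ p) := by
        rw [Complex.lintegral_comp_polarCoord_symm, lintegral_indicator measurableSet_ball]

end SubMeanValue

noncomputable def mobius (z w : ℂ) : ℂ := (z + w) / (1 + conj z * w)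

section Mobius

variable {z w : ℂ}

theorem norm_one_add_conj_mul_sq_sub_norm_add_sq (z w : ℂ) :
    ‖1 + conj z * w‖ ^ 2 - ‖z + w‖ ^ 2 = (1 - ‖z‖ ^ 2) * (1 - ‖w‖ ^ 2) := by
  simp only [Complex.sq_norm, normSq_apply, add_re, add_im, mul_re, mul_im, conj_re, conj_im,
    one_re, one_im]
  ring

theorem one_sub_norm_sq_pos (hz : z ∈ ball (0 : ℂ) 1) : 0 < 1 - ‖z‖ ^ 2 := by
  rw [mem_ball_zero_iff] at hz
  nlinarith [norm_nonneg z]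

theorem one_add_conj_mul_ne_zero (hz : z ∈ ball (0 : ℂ) 1) (hw : w ∈ ball (0 : ℂ) 1) :
    1 + conj z * w ≠ 0 := by
  rw [mem_ball_zero_iff] at hz hw
  intro h
  have : ‖conj z * w‖ < 1 := by
    rw [norm_mul, norm_conj]
    exact mul_lt_one_of_nonneg_of_lt_one_left (norm_nonneg z) hz hw.le
  rw [eq_neg_of_add_eq_zero_right h, norm_neg, norm_one] at this
  exact this.false

theorem mobius_mem_ball (hz : z ∈ ball (0 : ℂ) 1) (hw : w ∈ ball (0 : ℂ) 1) :
    mobius z w ∈ ball (0 : ℂ) 1 := by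
  have hD := norm_pos_iff.2 (one_add_conj_mul_ne_zero hz hw)
  have key := norm_one_add_conj_mul_sq_sub_norm_add_sq z w
  have := mul_pos (one_sub_norm_sq_pos hz) (one_sub_norm_sq_pos hw)
  rw [mem_ball_zero_iff, mobius, norm_div, div_lt_one hD]
  nlinarith [norm_nonneg (z + w)]

theorem mobius_neg_mobius (hz : z ∈ ball (0 : ℂ) 1) (hw : w ∈ ball (0 : ℂ) 1) :
    mobius (-z) (mobius z w) = w := by
  have hD := one_add_conj_mul_ne_zero hz hw
  have hz1 : (1 : ℂ) - conj z * z ≠ 0 := by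
    rw [conj_mul', ← ofReal_pow, ← ofReal_one, ← ofReal_sub, ofReal_ne_zero]
    exact (one_sub_norm_sq_pos hz).ne'
  have hnum : -z + (z + w) / (1 + conj z * w) = w * (1 - conj z * z) / (1 + conj z * w) := by
    rw [eq_div_iff hD, add_mul, div_mul_cancel₀ _ hD]
    ring
  have hden : 1 + -conj z * ((z + w) / (1 + conj z * w)) =
      (1 - conj z * z) / (1 + conj z * w) := by
    rw [eq_div_iff hD, add_mul, mul_assoc, div_mul_cancel₀ _ hD]
    ring
  rw [mobius, mobius, map_neg, hnum, hden, div_div_div_cancel_right₀ hD, mul_div_assoc,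
    div_self hz1, mul_one]

theorem mobius_zero (z : ℂ) : mobius z 0 = z := by simp [mobius]

theorem hasDerivAt_mobius (hw : 1 + conj z * w ≠ 0) :
    HasDerivAt (mobius z) (((1 - ‖z‖ ^ 2 : ℝ) : ℂ) / (1 + conj z * w) ^ 2) w := by
  have h := ((hasDerivAt_id w).const_add z).div
    (((hasDerivAt_id w).const_mul (conj z)).const_add 1) hw
  refine h.congr_deriv ?_
  push_cast
  rw [← conj_mul']
  simp only [id]
  ring

theorem mobius_image_ball (hz : z ∈ ball (0 : ℂ) 1) :
    mobius z '' ball (0 : ℂ) 1 = ball (0 : ℂ) 1 := by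
  refine (Set.mapsTo_iff_image_subset.1 fun w ↦ mobius_mem_ball hz).antisymm fun y hy ↦ ?_
  have hz' : -z ∈ ball (0 : ℂ) 1 := by simpa using hz
  exact ⟨mobius (-z) y, mobius_mem_ball hz' hy, by simpa using mobius_neg_mobius hz' hy⟩

theorem mobius_injOn (hz : z ∈ ball (0 : ℂ) 1) : Set.InjOn (mobius z) (ball (0 : ℂ) 1) :=
  Set.LeftInvOn.injOn fun _ hw ↦ mobius_neg_mobius hz hw

end Mobius

theorem lintegral_image_eq_lintegral_norm_deriv_sq_mul {s : Set ℂ} (hs : MeasurableSet s)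
    {φ φ' : ℂ → ℂ} (hφ : ∀ w ∈ s, HasDerivAt φ (φ' w) w) (hinj : Set.InjOn φ s)
    (F : ℂ → ℝ≥0∞) :
    ∫⁻ x in φ '' s, F x = ∫⁻ w in s, ENNReal.ofReal (‖φ' w‖ ^ 2) * F (φ w) := by
  rw [lintegral_image_eq_lintegral_abs_det_fderiv_mul volume hs
    (fun w hw ↦ ((hφ w hw).hasFDerivAt.restrictScalars ℝ).hasFDerivWithinAt) hinj]
  simp [ContinuousLinearMap.det, LinearMap.det_restrictScalars, Algebra.norm_complex_eq,
    Complex.normSq_eq_norm_sq]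

theorem integral_dA (F : ℂ → ℝ) : ∫ x, F x ∂dA = π⁻¹ * ∫ x in ball (0 : ℂ) 1, F x := by
  rw [dA, integral_smul_measure, ENNReal.toReal_inv, ENNReal.toReal_ofReal Real.pi_pos.le,
    smul_eq_mul]

theorem integrableOn_ball_of_integrable_dA {F : ℂ → ℝ} (hF : Integrable F dA) :
    IntegrableOn F (ball (0 : ℂ) 1) :=
  (integrable_smul_measure (by simp) (by simp [Real.pi_pos])).1 hF

theorem ofReal_mul_norm_rpow_mul_norm_le_lintegral_ball {f μ : ℂ → ℂ}
    (hf : DifferentiableOn ℂ f (ball 0 1)) (hμ : DifferentiableOn ℂ μ (ball 0 1))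
    (hμ0 : ∀ w ∈ ball (0 : ℂ) 1, μ w ≠ 0) {p : ℝ} (hp : 1 ≤ p) {z : ℂ} (hz : z ∈ ball (0 : ℂ) 1) :
    ENNReal.ofReal (π * (1 - ‖z‖ ^ 2) ^ 2 * (‖f z‖ ^ p * ‖μ z‖)) ≤
      ∫⁻ x in ball (0 : ℂ) 1, ENNReal.ofReal (‖f x‖ ^ p * ‖μ x‖) := by
  set φ := mobius z
  have hφ : ∀ w ∈ ball (0 : ℂ) 1, HasDerivAt φ (deriv φ w) w := fun w hw ↦
    (hasDerivAt_mobius (one_add_conj_mul_ne_zero hz hw)).differentiableAt.hasDerivAt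
  have hφd : DifferentiableOn ℂ φ (ball 0 1) := fun w hw ↦
    (hφ w hw).differentiableAt.differentiableWithinAt
  have hmaps : Set.MapsTo φ (ball 0 1) (ball 0 1) := fun w hw ↦ mobius_mem_ball hz hw
  have hz2 := one_sub_norm_sq_pos hz
  have hφ'0 : ∀ w ∈ ball (0 : ℂ) 1, deriv φ w ≠ 0 := fun w hw ↦ by
    rw [(hasDerivAt_mobius (one_add_conj_mul_ne_zero hz hw)).deriv]
    exact div_ne_zero (ofReal_ne_zero.2 hz2.ne') (pow_ne_zero _ (one_add_conj_mul_ne_zero hz hw))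
  obtain ⟨k, hkd, hk⟩ := ((hμ.comp hφd hmaps).mul ((hφd.deriv isOpen_ball).pow 2))
    |>.exists_rpow_norm_eq (fun w hw ↦ mul_ne_zero (hμ0 _ (hmaps hw)) (pow_ne_zero 2 (hφ'0 w hw)))
      (zero_lt_one.trans_le hp).ne'
  set G := fun w ↦ f (φ w) * k w
  have hG : ∀ w ∈ ball (0 : ℂ) 1, ‖G w‖ ^ p = ‖deriv φ w‖ ^ 2 * (‖f (φ w)‖ ^ p * ‖μ (φ w)‖) := by
    intro w hw
    simp only [G, norm_mul, Real.mul_rpow (norm_nonneg _) (norm_nonneg _), hk w hw, Pi.mul_apply,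
      Pi.pow_apply, Function.comp_apply, norm_pow]
    ring
  have hG0 : ‖G 0‖ ^ p = (1 - ‖z‖ ^ 2) ^ 2 * (‖f z‖ ^ p * ‖μ z‖) := by
    rw [hG 0 (mem_ball_self one_pos), (hasDerivAt_mobius (by simp)).deriv]
    simp only [φ, mobius_zero, mul_zero, add_zero, one_pow, div_one, norm_real,
      Real.norm_of_nonneg hz2.le]
  calc ENNReal.ofReal (π * (1 - ‖z‖ ^ 2) ^ 2 * (‖f z‖ ^ p * ‖μ z‖))
      = ENNReal.ofReal (π * 1 ^ 2 * ‖G 0‖ ^ p) := by rw [hG0]; ring_nf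
    _ ≤ ∫⁻ w in ball (0 : ℂ) 1, ENNReal.ofReal (‖G w‖ ^ p) :=
        ofReal_mul_norm_rpow_le_lintegral_ball zero_le_one ((hf.comp hφd hmaps).mul hkd) hp
    _ = ∫⁻ w in ball (0 : ℂ) 1,
          ENNReal.ofReal (‖deriv φ w‖ ^ 2) * ENNReal.ofReal (‖f (φ w)‖ ^ p * ‖μ (φ w)‖) :=
        setLIntegral_congr_fun measurableSet_ball fun w hw ↦ by
          rw [hG w hw, ENNReal.ofReal_mul (by positivity)]
    _ = ∫⁻ x in ball (0 : ℂ) 1, ENNReal.ofReal (‖f x‖ ^ p * ‖μ x‖) := by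
        rw [← lintegral_image_eq_lintegral_norm_deriv_sq_mul measurableSet_ball hφ
          (mobius_injOn hz) fun x ↦ ENNReal.ofReal (‖f x‖ ^ p * ‖μ x‖), mobius_image_ball hz]

theorem stmt0_general (p : ℝ) (hp : 1 ≤ p) (v : ℂ → ℝ) (μ : ℂ → ℂ)
    (hvμ : IsAnalyticWeight v μ)
    (f : ℂ → ℂ) (hf : DifferentiableOn ℂ f (ball (0:ℂ) 1))
    (hfp : Integrable (fun z => ‖f z‖ ^ p * v z) dA)
    (z : ℂ) (hz : z ∈ ball (0:ℂ) 1) :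
    ‖f z‖ ≤
      bergNorm ℂ p v f / ((1 - ‖z‖ ^ 2) ^ ((2:ℝ)/p) * (v z) ^ (1/p)) := by
  obtain ⟨hμ, hμ0, hvμ⟩ := hvμ
  have hp0 : 0 < p := zero_lt_one.trans_le hp
  have hz2 := one_sub_norm_sq_pos hz
  have hvz : 0 < v z := by rw [hvμ z hz]; exact norm_pos_iff.2 (hμ0 z hz)
  have hF0 : ∀ w ∈ ball (0 : ℂ) 1, 0 ≤ ‖f w‖ ^ p * v w := fun w hw ↦ by
    rw [hvμ w hw]; positivity
  have hbound : (1 - ‖z‖ ^ 2) ^ 2 * (‖f z‖ ^ p * v z) ≤ ∫ w, ‖f w‖ ^ p * v w ∂dA := by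
    have h := ofReal_mul_norm_rpow_mul_norm_le_lintegral_ball hf hμ hμ0 hp hz
    rw [← hvμ z hz, ← setLIntegral_congr_fun (f := fun w ↦ ENNReal.ofReal (‖f w‖ ^ p * v w))
        measurableSet_ball fun w hw ↦ by simp only [hvμ w hw],
      ← ofReal_integral_eq_lintegral_ofReal (integrableOn_ball_of_integrable_dA hfp)
        (ae_restrict_of_forall_mem measurableSet_ball hF0),
      ENNReal.ofReal_le_ofReal_iff (setIntegral_nonneg measurableSet_ball hF0)] at h
    rw [integral_dA, le_inv_mul_iff₀ Real.pi_pos, ← mul_assoc]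
    exact h
  rw [bergNorm, le_div_iff₀ (by positivity)]
  calc ‖f z‖ * ((1 - ‖z‖ ^ 2) ^ ((2:ℝ)/p) * (v z) ^ (1/p))
      = ((1 - ‖z‖ ^ 2) ^ 2 * (‖f z‖ ^ p * v z)) ^ (1/p) := by
        rw [Real.mul_rpow (by positivity) (by positivity), Real.mul_rpow (by positivity) hvz.le,
          ← Real.rpow_natCast_mul hz2.le, one_div, Real.rpow_rpow_inv (norm_nonneg _) hp0.ne',
          Nat.cast_ofNat, ← div_eq_mul_inv]
        ring
    _ ≤ _ := by gcongr

/-- pointwise estimate in the weighted Bergman space. -/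
theorem stmt0 (p : ℝ) (hp : 1 ≤ p) (v : ℂ → ℝ) (μ : ℂ → ℂ)
    (hv : IsWeight v) (hvμ : IsAnalyticWeight v μ)
    (f : ℂ → ℂ) (hf : DifferentiableOn ℂ f (ball (0:ℂ) 1))
    (hfp : Integrable (fun z => ‖f z‖ ^ p * v z) dA)
    (z : ℂ) (hz : z ∈ ball (0:ℂ) 1) :
    ‖f z‖ ≤
      bergNorm ℂ p v f / ((1 - ‖z‖ ^ 2) ^ ((2:ℝ)/p) * (v z) ^ (1/p)) :=
  stmt0_general p hp v μ hvμ f hf hfp z hz
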